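/- arXiv:2512.05888 — 9 statements merged into one kernel-verified Lean document; each statement's English description precedes it below -/
import Mathlib

section
/- Let p, v, a, ω : ℝ → ℝ³ and R : ℝ → ℝ^{3×3} be functions, μ > 0, and suppose that at every time t the trajectory satisfies ṗ(t) = v(t), v̇(t) = R(t)a(t) + g(p(t)) with p(t) ≠ 0, and Ṙ(t) = R(t)[ω(t)]× (in the sense of HasDerivAt for matrix- and vector-valued functions). Define X(t) as the SE₂(3)-embedding of (R(t), v(t), p(t)), M(t) = (0, g(p(t)), 0)∧, and N(t) = (0, a(t), ω(t))∧. Then X satisfies the mixed-invariant equation Ẋ(t) = (M(t) − C)·X(t) + X(t)·(N(t) + C) at every time t. -/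
noncomputable section
open Matrix

/-- ℝ³ with the Euclidean norm. -/
abbrev V3 := EuclideanSpace ℝ (Fin 3)

/-- The skew-symmetric cross-product matrix `[w]×`. -/
def skew (w : V3) : Matrix (Fin 3) (Fin 3) ℝ :=
  !![0, -w 2, w 1;
     w 2, 0, -w 0;
     -w 1, w 0, 0]

/-- The wedge map of `ξ = (ξ_p, ξ_v, ξ_R)` into `𝔰𝔢₂(3) ⊂ ℝ^{5×5}`. -/
def wedge (ξp ξv ξR : V3) : Matrix (Fin 5) (Fin 5) ℝ :=
  !![0, -ξR 2, ξR 1, ξv 0, ξp 0;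
     ξR 2, 0, -ξR 0, ξv 1, ξp 1;
     -ξR 1, ξR 0, 0, ξv 2, ξp 2;
     0, 0, 0, 0, 0;
     0, 0, 0, 0, 0]

/-- The SE₂(3)-embedding `[R v p; 0 1 0; 0 0 1]`. -/
def se23 (R : Matrix (Fin 3) (Fin 3) ℝ) (v p : V3) : Matrix (Fin 5) (Fin 5) ℝ :=
  !![R 0 0, R 0 1, R 0 2, v 0, p 0;
     R 1 0, R 1 1, R 1 2, v 1, p 1;
     R 2 0, R 2 1, R 2 2, v 2, p 2;
     0, 0, 0, 1, 0;
     0, 0, 0, 0, 1]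

/-- The constant matrix `C`: a single 1 in row 4, column 5. -/
def Cmat : Matrix (Fin 5) (Fin 5) ℝ :=
  !![0, 0, 0, 0, 0;
     0, 0, 0, 0, 0;
     0, 0, 0, 0, 0;
     0, 0, 0, 0, 1;
     0, 0, 0, 0, 0]

/-- The inverse-square gravity field `g(x) = -μ‖x‖⁻³ x`. -/
def grav (μ : ℝ) (x : V3) : V3 := (-(μ / ‖x‖ ^ 3)) • x

/-- The cross product on ℝ³. -/
def cross3 (a b : V3) : V3 :=
  WithLp.toLp 2 ![a 1 * b 2 - a 2 * b 1, a 2 * b 0 - a 0 * b 2, a 0 * b 1 - a 1 * b 0]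

/-- The SO(3) left Jacobian. -/
def Jl (φ : V3) : Matrix (Fin 3) (Fin 3) ℝ :=
  1 + ((1 - Real.cos ‖φ‖) / ‖φ‖ ^ 2) • skew φ
    + ((‖φ‖ - Real.sin ‖φ‖) / ‖φ‖ ^ 3) • (skew φ ^ 2)

/-- The SO(3) inverse right Jacobian. -/
def Jrinv (φ : V3) : Matrix (Fin 3) (Fin 3) ℝ :=
  1 + (1 / 2 : ℝ) • skew φ
    + ((‖φ‖ ^ 2)⁻¹ - (1 + Real.cos ‖φ‖) / (2 * ‖φ‖ * Real.sin ‖φ‖)) • (skew φ ^ 2)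

attribute [local instance] Matrix.normedAddCommGroup Matrix.normedSpace

/-!
`X` is affine in `(R, v, p)`, so `Ẋ` is the block matrix `[Ṙ v̇ ṗ; 0 0 0; 0 0 0]`. On the
right-hand side, `M X = M` because `M` only reads the fourth row of `X`, and
`X N = [R[ω]× Ra 0; 0 0 0; 0 0 0]`. The correction `C` supplies the kinematics `ṗ = v`:
`C X = C`, while `X C` copies the column `(v; 1; 0)` of `X` into the last column, so the
constant parts cancel and only `v` survives in the `p`-slot.
-/

def se23Tangent (A : Matrix (Fin 3) (Fin 3) ℝ) (u w : V3) : Matrix (Fin 5) (Fin 5) ℝ :=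
  !![A 0 0, A 0 1, A 0 2, u 0, w 0;
     A 1 0, A 1 1, A 1 2, u 1, w 1;
     A 2 0, A 2 1, A 2 2, u 2, w 2;
     0, 0, 0, 0, 0;
     0, 0, 0, 0, 0]

theorem se23Tangent_add (A A' : Matrix (Fin 3) (Fin 3) ℝ) (u u' w w' : V3) :
    se23Tangent A u w + se23Tangent A' u' w' = se23Tangent (A + A') (u + u') (w + w') := by
  ext i j
  fin_cases i <;> fin_cases j <;> simp [se23Tangent]

theorem skew_zero : skew 0 = 0 := by
  ext i j
  fin_cases i <;> fin_cases j <;> simp [skew]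

theorem wedge_eq_se23Tangent (ξp ξv ξR : V3) :
    wedge ξp ξv ξR = se23Tangent (skew ξR) ξv ξp := by
  ext i j
  fin_cases i <;> fin_cases j <;> simp [wedge, se23Tangent, skew]

theorem hasDerivAt_se23 {R : ℝ → Matrix (Fin 3) (Fin 3) ℝ} {v p : ℝ → V3}
    {R' : Matrix (Fin 3) (Fin 3) ℝ} {v' p' : V3} {t : ℝ}
    (hR : HasDerivAt R R' t) (hv : HasDerivAt v v' t) (hp : HasDerivAt p p' t) :
    HasDerivAt (fun s => se23 (R s) (v s) (p s)) (se23Tangent R' v' p') t := by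
  have hRij i j : HasDerivAt (fun s => R s i j) (R' i j) t :=
    hasDerivAt_pi.1 (hasDerivAt_pi.1 hR i) j
  have hvi i : HasDerivAt (fun s => v s i) (v' i) t :=
    (PiLp.hasFDerivAt_apply 2 (v t) i).comp_hasDerivAt t hv
  have hpi i : HasDerivAt (fun s => p s i) (p' i) t :=
    (PiLp.hasFDerivAt_apply 2 (p t) i).comp_hasDerivAt t hp
  refine hasDerivAt_pi.2 fun i => hasDerivAt_pi.2 fun j => ?_
  fin_cases i <;> fin_cases j <;>
    simp only [se23, se23Tangent, Matrix.of_apply, Matrix.cons_val', Matrix.cons_val_zero,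
      Matrix.cons_val_one, Matrix.cons_val_two, Matrix.cons_val_three, Matrix.cons_val_four,
      Matrix.empty_val', Matrix.cons_val_fin_one, Fin.zero_eta, Fin.mk_one, Fin.reduceFinMk] <;>
    first | exact hasDerivAt_const t _ | exact hRij _ _ | exact hvi _ | exact hpi _

section Products

variable (R : Matrix (Fin 3) (Fin 3) ℝ) (v p : V3)

theorem wedge_velocity_mul_se23 (g : V3) : wedge 0 g 0 * se23 R v p = wedge 0 g 0 := by
  ext i j
  fin_cases i <;> fin_cases j <;> simp [se23, wedge, Matrix.mul_apply, Fin.sum_univ_five]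

theorem Cmat_mul_se23 : Cmat * se23 R v p = Cmat := by
  ext i j
  fin_cases i <;> fin_cases j <;> simp [se23, Cmat, Matrix.mul_apply, Fin.sum_univ_five]

theorem se23_mul_Cmat : se23 R v p * Cmat = se23Tangent 0 0 v + Cmat := by
  ext i j
  fin_cases i <;> fin_cases j <;>
    simp [se23, se23Tangent, Cmat, Matrix.mul_apply, Fin.sum_univ_five]

theorem se23_mul_wedge (a ω : V3) :
    se23 R v p * wedge 0 a ω = se23Tangent (R * skew ω) (Matrix.toEuclideanLin R a) 0 := by
  ext i j
  fin_cases i <;> fin_cases j <;>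
    simp [se23, se23Tangent, wedge, skew, Matrix.mul_apply, Fin.sum_univ_five,
      Fin.sum_univ_three, Matrix.toLpLin_apply, Matrix.mulVec, dotProduct]

theorem mixed_invariant_field_eq_se23Tangent (g a ω : V3) :
    (wedge 0 g 0 - Cmat) * se23 R v p + se23 R v p * (wedge 0 a ω + Cmat)
      = se23Tangent (R * skew ω) (Matrix.toEuclideanLin R a + g) v :=
  calc _ = wedge 0 g 0 + se23Tangent (R * skew ω) (Matrix.toEuclideanLin R a) 0
        + se23Tangent 0 0 v := by
        rw [sub_mul, mul_add, wedge_velocity_mul_se23, Cmat_mul_se23, se23_mul_wedge,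
          se23_mul_Cmat]
        abel
    _ = _ := by
        rw [wedge_eq_se23Tangent, se23Tangent_add, se23Tangent_add]
        simp [skew_zero, add_comm]

end Products

theorem spacecraft_mixed_invariant_general
    (μ : ℝ)
    (p v a ω : ℝ → V3) (R : ℝ → Matrix (Fin 3) (Fin 3) ℝ)
    (hp : ∀ t, HasDerivAt p (v t) t)
    (hv : ∀ t, HasDerivAt v (Matrix.toEuclideanLin (R t) (a t) + grav μ (p t)) t)
    (hR : ∀ t, HasDerivAt R (R t * skew (ω t)) t) :
    ∀ t, HasDerivAt (fun s => se23 (R s) (v s) (p s))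
      ((wedge 0 (grav μ (p t)) 0 - Cmat) * se23 (R t) (v t) (p t)
        + se23 (R t) (v t) (p t) * (wedge 0 (a t) (ω t) + Cmat)) t := by
  intro t
  rw [mixed_invariant_field_eq_se23Tangent]
  exact hasDerivAt_se23 (hR t) (hv t) (hp t)

/-- the thrusting-spacecraft dynamics embed in SE₂(3) in
mixed-invariant form `Ẋ = (M − C)X + X(N + C)`. -/
theorem spacecraft_mixed_invariant
    (μ : ℝ) (hμ : 0 < μ)
    (p v a ω : ℝ → V3) (R : ℝ → Matrix (Fin 3) (Fin 3) ℝ)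
    (hp : ∀ t, HasDerivAt p (v t) t)
    (hpne : ∀ t, p t ≠ 0)
    (hv : ∀ t, HasDerivAt v (Matrix.toEuclideanLin (R t) (a t) + grav μ (p t)) t)
    (hR : ∀ t, HasDerivAt R (R t * skew (ω t)) t) :
    ∀ t, HasDerivAt (fun s => se23 (R s) (v s) (p s))
      ((wedge 0 (grav μ (p t)) 0 - Cmat) * se23 (R t) (v t) (p t)
        + se23 (R t) (v t) (p t) * (wedge 0 (a t) (ω t) + Cmat)) t :=
  spacecraft_mixed_invariant_general μ p v a ω R hp hv hR
end
end

section
/- Let X, X̄, M, M̄, N, N̄ : ℝ → ℝ^{5×5} be matrix-valued functions with X and X̄ differentiable, X(t) and X̄(t) invertible for all t, satisfying Ẋ = (M − C)X + X(N + C) and Ẋ̄ = (M̄ − C)X̄ + X̄(N̄ + C) pointwise (HasDerivAt). Set η = X⁻¹X̄, M̃ = M̄ − M, Ñ = N̄ − N. Then at every time t, η⁻¹η̇ = X̄⁻¹M̃X̄ + (N̄ − η⁻¹N̄η) + η⁻¹Ñη + (C − η⁻¹Cη). -/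
/-! For `η = X⁻¹ X̄` the product and inverse rules give `η̇ = X⁻¹ (Ẋ̄ - Ẋ η)`, so the
left-trivialized velocity of `η` is `X̄⁻¹ Ẋ̄ - η⁻¹ (X⁻¹ Ẋ) η`. Inserting
`X⁻¹ Ẋ = X⁻¹ (M - C) X + (N + C)`, the analogous formula for `X̄`, and
`η⁻¹ X⁻¹ Y X η = X̄⁻¹ Y X̄`, the claim becomes a ring identity. -/

noncomputable section
open Matrix

section InverseMul

open scoped Ring

variable {R : Type*} [Ring R]

theorem Ring.inverse_inverse_mul {a : R} (b : R) (ha : IsUnit a) :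
    (a⁻¹ʳ * b)⁻¹ʳ = b⁻¹ʳ * a := by
  rw [Ring.inverse_mul (.inl (isUnit_ringInverse.mpr ha)), Ring.inverse_inverse ha]

theorem Ring.inverse_mul_mul_add_mul_mul {a : R} (m n : R) (ha : IsUnit a) :
    a⁻¹ʳ * (m * a + a * n) = a⁻¹ʳ * m * a + n := by
  rw [mul_add, Ring.inverse_mul_cancel_left _ _ ha, mul_assoc]

theorem Ring.inverse_inverse_mul_conj {a : R} (b m : R) (ha : IsUnit a) :
    (a⁻¹ʳ * b)⁻¹ʳ * (a⁻¹ʳ * m * a) * (a⁻¹ʳ * b) = b⁻¹ʳ * m * b := by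
  rw [Ring.inverse_inverse_mul b ha]
  simp only [mul_assoc, Ring.mul_inverse_cancel_left _ _ ha]

/-- With `η = a⁻¹ b` and `η̇ = a⁻¹ (ḃ - ȧ a⁻¹ b)` this reads `η⁻¹ η̇ = b⁻¹ ḃ - η⁻¹ (a⁻¹ ȧ) η`. -/
theorem Ring.inverse_mul_leftTrivialization {a : R} (b a' b' : R) (ha : IsUnit a) :
    (a⁻¹ʳ * b)⁻¹ʳ * (a⁻¹ʳ * (b' - a' * a⁻¹ʳ * b))
      = b⁻¹ʳ * b' - (a⁻¹ʳ * b)⁻¹ʳ * (a⁻¹ʳ * a') * (a⁻¹ʳ * b) := by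
  rw [Ring.inverse_inverse_mul b ha]
  simp only [mul_assoc, mul_sub, Ring.mul_inverse_cancel_left _ _ ha]

end InverseMul

section Derivative

open scoped Ring

variable {𝕜 R : Type*} [NontriviallyNormedField 𝕜] [NormedRing R] [HasSummableGeomSeries R]
  [NormedAlgebra 𝕜 R] {f g : 𝕜 → R} {f' g' : R} {x : 𝕜}

theorem HasDerivAt.ringInverse (hf : HasDerivAt f f' x) (hx : IsUnit (f x)) :
    HasDerivAt (fun y => (f y)⁻¹ʳ) (-((f x)⁻¹ʳ * f' * (f x)⁻¹ʳ)) x := by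
  have := (hasFDerivAt_ringInverse (𝕜 := 𝕜) hx.unit).comp_hasDerivAt x hf
  rw [← Ring.inverse_unit, IsUnit.unit_spec] at this
  simp only [_root_.neg_apply, ContinuousLinearMap.mulLeftRight_apply] at this
  exact this

theorem HasDerivAt.ringInverse_mul (hf : HasDerivAt f f' x) (hg : HasDerivAt g g' x)
    (hx : IsUnit (f x)) :
    HasDerivAt (fun y => (f y)⁻¹ʳ * g y) ((f x)⁻¹ʳ * (g' - f' * (f x)⁻¹ʳ * g x)) x := by
  convert (hf.ringInverse hx).fun_mul hg using 1
  noncomm_ring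

end Derivative

section
attribute [local instance] Matrix.linftyOpNormedAddCommGroup Matrix.linftyOpNormedRing
  Matrix.linftyOpNormedAlgebra

/-- `HasDerivAt` depends only on the topology, which all the usual matrix norms induce, so this
lemma, proved with the (submultiplicative) operator norm, applies under any of them. -/
theorem Matrix.hasDerivAt_nonsing_inv_mul {n : Type*} [Fintype n] [DecidableEq n]
    {A B : ℝ → Matrix n n ℝ} {A' B' : Matrix n n ℝ} {t : ℝ} (hA : HasDerivAt A A' t)
    (hB : HasDerivAt B B' t) (ht : IsUnit (A t)) :
    HasDerivAt (fun s => (A s)⁻¹ * B s) ((A t)⁻¹ * (B' - A' * (A t)⁻¹ * B t)) t := by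
  simp only [Matrix.nonsing_inv_eq_ringInverse]
  exact hA.ringInverse_mul hB ht

end

attribute [local instance] Matrix.normedAddCommGroup Matrix.normedSpace

/-- the left-trivialized error dynamics
`η⁻¹η̇ = X̄⁻¹M̃X̄ + (N̄ − η⁻¹N̄η) + η⁻¹Ñη + (C − η⁻¹Cη)`. -/
theorem left_trivialized_error_dynamics
    (X Xb M Mb N Nb : ℝ → Matrix (Fin 5) (Fin 5) ℝ)
    (hXinv : ∀ t, IsUnit (X t))
    (hXbinv : ∀ t, IsUnit (Xb t))
    (hX : ∀ t, HasDerivAt X ((M t - Cmat) * X t + X t * (N t + Cmat)) t)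
    (hXb : ∀ t, HasDerivAt Xb ((Mb t - Cmat) * Xb t + Xb t * (Nb t + Cmat)) t) :
    ∀ t, ((X t)⁻¹ * Xb t)⁻¹ * deriv (fun s => (X s)⁻¹ * Xb s) t
      = (Xb t)⁻¹ * (Mb t - M t) * Xb t
        + (Nb t - ((X t)⁻¹ * Xb t)⁻¹ * Nb t * ((X t)⁻¹ * Xb t))
        + ((X t)⁻¹ * Xb t)⁻¹ * (Nb t - N t) * ((X t)⁻¹ * Xb t)
        + (Cmat - ((X t)⁻¹ * Xb t)⁻¹ * Cmat * ((X t)⁻¹ * Xb t)) := by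
  intro t
  have hη : deriv (fun s => (X s)⁻¹ * Xb s) t = _ :=
    (Matrix.hasDerivAt_nonsing_inv_mul (hX t) (hXb t) (hXinv t)).deriv
  rw [hη]
  simp only [Matrix.nonsing_inv_eq_ringInverse]
  rw [Ring.inverse_mul_leftTrivialization _ _ _ (hXinv t),
    Ring.inverse_mul_mul_add_mul_mul _ _ (hXinv t), Ring.inverse_mul_mul_add_mul_mul _ _ (hXbinv t),
    mul_add, add_mul, Ring.inverse_inverse_mul_conj _ _ (hXinv t)]
  noncomm_ring
end
end

section
/- Let η be the SE₂(3)-embedding of (R, v, p) with R an orthogonal 3×3 real matrix (RᵀR = I). Then η is invertible and C − η⁻¹Cη = (0, 0, Rᵀv)∧ᵖᵒˢ, i.e. C − η⁻¹Cη equals the wedge of the coordinate vector with position component Rᵀv and zero velocity and rotation components. In particular C − η⁻¹Cη lies in the image of the wedge map, even though C itself does not. -/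
noncomputable section
open Matrix

/-! Since the last row of `η = se23 R v p` is `e₅ᵀ`, we have `Cη = C`, while `ηC` is the fourth
column of `η` placed in the fifth column; hence `ηC − Cη = (v, 0, 0)∧` and
`C − η⁻¹Cη = η⁻¹(ηC − Cη)`. For orthogonal `R` the inverse is explicit,
`η⁻¹ = se23 Rᵀ (−Rᵀv) (−Rᵀp)`, and left multiplication by any `se23 R' v' p'` sends a wedge
with zero rotation part `(ξp, ξv, 0)∧` to `(R'ξp, R'ξv, 0)∧`. -/

lemma toEuclideanLin_apply_fin3 (M : Matrix (Fin 3) (Fin 3) ℝ) (w : V3) (k : Fin 3) :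
    toEuclideanLin M w k = M k 0 * w 0 + M k 1 * w 1 + M k 2 * w 2 := by
  simp [toLpLin_apply, mulVec, dotProduct, Fin.sum_univ_succ, add_assoc]

lemma se23_mul_se23 (R S : Matrix (Fin 3) (Fin 3) ℝ) (v p w q : V3) :
    se23 R v p * se23 S w q
      = se23 (R * S) (toEuclideanLin R w + v) (toEuclideanLin R q + p) := by
  ext i j
  fin_cases i <;> fin_cases j <;>
    simp [se23, mul_apply, Fin.sum_univ_succ, toEuclideanLin_apply_fin3] <;> ring

lemma se23_one_zero_zero : se23 1 0 0 = 1 := by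
  ext i j
  fin_cases i <;> fin_cases j <;> simp [se23, one_apply]

def se23Inv (R : Matrix (Fin 3) (Fin 3) ℝ) (v p : V3) : Matrix (Fin 5) (Fin 5) ℝ :=
  se23 Rᵀ (-toEuclideanLin Rᵀ v) (-toEuclideanLin Rᵀ p)

lemma se23Inv_mul_se23 {R : Matrix (Fin 3) (Fin 3) ℝ} (hR : Rᵀ * R = 1) (v p : V3) :
    se23Inv R v p * se23 R v p = 1 := by
  rw [se23Inv, se23_mul_se23, hR, add_neg_cancel, add_neg_cancel, se23_one_zero_zero]

lemma isUnit_se23 {R : Matrix (Fin 3) (Fin 3) ℝ} (hR : Rᵀ * R = 1) (v p : V3) :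
    IsUnit (se23 R v p) :=
  .of_mul_eq_one_right _ (se23Inv_mul_se23 hR v p)

lemma inv_se23 {R : Matrix (Fin 3) (Fin 3) ℝ} (hR : Rᵀ * R = 1) (v p : V3) :
    (se23 R v p)⁻¹ = se23Inv R v p :=
  inv_eq_left_inv (se23Inv_mul_se23 hR v p)

lemma se23_mul_wedge_zero (R : Matrix (Fin 3) (Fin 3) ℝ) (v p ξp ξv : V3) :
    se23 R v p * wedge ξp ξv 0 = wedge (toEuclideanLin R ξp) (toEuclideanLin R ξv) 0 := by
  ext i j
  fin_cases i <;> fin_cases j <;>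
    simp [se23, wedge, mul_apply, Fin.sum_univ_succ, toEuclideanLin_apply_fin3, add_assoc]

lemma se23_mul_Cmat_sub_Cmat_mul_se23 (R : Matrix (Fin 3) (Fin 3) ℝ) (v p : V3) :
    se23 R v p * Cmat - Cmat * se23 R v p = wedge v 0 0 := by
  ext i j
  fin_cases i <;> fin_cases j <;> simp [se23, Cmat, wedge]

lemma Cmat_ne_wedge (ξp ξv ξR : V3) : Cmat ≠ wedge ξp ξv ξR := fun h ↦ by
  simpa [Cmat, wedge] using congrFun (congrFun h 3) 4

/-- for `η` an SE₂(3)-embedding with orthogonal rotation block,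
`η` is invertible and `C − η⁻¹Cη = (Rᵀv, 0, 0)∧`, which lies in the image of
the wedge map even though `C` itself does not. -/
theorem C_conjugation_in_wedge_image
    (R : Matrix (Fin 3) (Fin 3) ℝ) (v p : V3) (hR : Rᵀ * R = 1) :
    IsUnit (se23 R v p) ∧
    Cmat - (se23 R v p)⁻¹ * Cmat * se23 R v p
      = wedge (Matrix.toEuclideanLin Rᵀ v) 0 0 ∧
    ∀ ξp ξv ξR : V3, Cmat ≠ wedge ξp ξv ξR := by
  have hη := isUnit_se23 hR v p
  refine ⟨hη, ?_, Cmat_ne_wedge⟩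
  set η := se23 R v p
  calc Cmat - η⁻¹ * Cmat * η = η⁻¹ * (η * Cmat - Cmat * η) := by
        rw [mul_sub, ← mul_assoc, nonsing_inv_mul _ ((isUnit_iff_isUnit_det η).mp hη), one_mul,
          mul_assoc]
    _ = wedge (toEuclideanLin Rᵀ v) 0 0 := by
        rw [se23_mul_Cmat_sub_Cmat_mul_se23, inv_se23 hR, se23Inv, se23_mul_wedge_zero, map_zero]
end
end

section
/- Let μ > 0 and x ∈ ℝ³ with x ≠ 0 (Euclidean norm and inner product). The operator norm of the linear map u ↦ −μ‖x‖⁻³ u + 3μ‖x‖⁻⁵⟨x, u⟩ x (the Fréchet derivative of the inverse-square gravity field at x) equals 2μ/‖x‖³. -/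
noncomputable section
open Matrix

/-! The map is `a • id + b • ⟪x, ·⟫ x` with `a = -μ/‖x‖³`, `b = 3μ/‖x‖⁵`: it acts as `a` on `x⊥` and
as `a + b‖x‖² = 2μ/‖x‖³` on `x`. Expanding `‖a u + b⟪x, u⟫ x‖²` and bounding `⟪x, u⟫²` by
Cauchy–Schwarz shows that the larger of the two moduli `|a| ≤ |a + b‖x‖²|` is the operator norm. -/

section RankOnePerturbation

variable {E : Type*} [NormedAddCommGroup E] [InnerProductSpace ℝ E]

open scoped RealInnerProductSpace

lemma smul_id_add_smul_innerSL_smulRight_apply (a b : ℝ) (x u : E) :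
    (a • ContinuousLinearMap.id ℝ E + b • (innerSL ℝ x).smulRight x) u
      = a • u + (b * ⟪x, u⟫) • x := by
  simp [smul_smul]

lemma norm_sq_smul_add_inner_smul (a b : ℝ) (x u : E) :
    ‖a • u + (b * ⟪x, u⟫) • x‖ ^ 2
      = a ^ 2 * ‖u‖ ^ 2 + b * (2 * a + b * ‖x‖ ^ 2) * ⟪x, u⟫ ^ 2 := by
  rw [norm_add_sq_real, norm_smul, norm_smul, real_inner_smul_left, real_inner_smul_right,
    real_inner_comm, mul_pow, mul_pow, Real.norm_eq_abs, Real.norm_eq_abs, sq_abs, sq_abs]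
  ring

lemma norm_smul_id_add_smul_innerSL_smulRight (a b : ℝ) {x : E} (hx : x ≠ 0)
    (hab : |a| ≤ |a + b * ‖x‖ ^ 2|) :
    ‖a • ContinuousLinearMap.id ℝ E + b • (innerSL ℝ x).smulRight x‖ = |a + b * ‖x‖ ^ 2| := by
  have hx2 : 0 < ‖x‖ ^ 2 := by positivity
  set T := a • ContinuousLinearMap.id ℝ E + b • (innerSL ℝ x).smulRight x
  apply le_antisymm
  · refine T.opNorm_le_bound (abs_nonneg _) fun u ↦ ?_
    -- `(a + b‖x‖²)² - a² = b (2a + b‖x‖²) ‖x‖²`, so the coefficient of `⟪x, u⟫²` is nonnegative.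
    have hk : 0 ≤ b * (2 * a + b * ‖x‖ ^ 2) := by
      refine nonneg_of_mul_nonneg_left ?_ hx2
      nlinarith [sq_le_sq.mpr hab]
    have hcs : ⟪x, u⟫ ^ 2 ≤ ‖x‖ ^ 2 * ‖u‖ ^ 2 := by
      rw [← mul_pow, ← sq_abs]
      exact pow_le_pow_left₀ (abs_nonneg _) (abs_real_inner_le_norm x u) 2
    refine (pow_le_pow_iff_left₀ (norm_nonneg _) (by positivity) two_ne_zero).mp ?_
    calc ‖T u‖ ^ 2 = a ^ 2 * ‖u‖ ^ 2 + b * (2 * a + b * ‖x‖ ^ 2) * ⟪x, u⟫ ^ 2 := by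
          rw [smul_id_add_smul_innerSL_smulRight_apply, norm_sq_smul_add_inner_smul]
      _ ≤ a ^ 2 * ‖u‖ ^ 2 + b * (2 * a + b * ‖x‖ ^ 2) * (‖x‖ ^ 2 * ‖u‖ ^ 2) := by gcongr
      _ = (|a + b * ‖x‖ ^ 2| * ‖u‖) ^ 2 := by rw [mul_pow, sq_abs]; ring
  · have hTx : T x = (a + b * ‖x‖ ^ 2) • x := by
      rw [smul_id_add_smul_innerSL_smulRight_apply, real_inner_self_eq_norm_sq, add_smul]
    have h := T.le_opNorm x
    rw [hTx, norm_smul, Real.norm_eq_abs] at h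
    exact le_of_mul_le_mul_right h (norm_pos_iff.mpr hx)

end RankOnePerturbation

/-- the operator norm of the gravity-field derivative
`u ↦ −μ‖x‖⁻³ u + 3μ‖x‖⁻⁵⟨x, u⟩ x` equals `2μ/‖x‖³`. -/
theorem grav_deriv_opNorm (μ : ℝ) (hμ : 0 < μ) (x : V3) (hx : x ≠ 0) :
    ‖(-(μ / ‖x‖ ^ 3)) • ContinuousLinearMap.id ℝ V3
        + (3 * μ / ‖x‖ ^ 5) • (innerSL ℝ x).smulRight x‖ = 2 * μ / ‖x‖ ^ 3 := by
  have hxn : ‖x‖ ≠ 0 := norm_ne_zero_iff.mpr hx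
  have hc : 0 ≤ μ / ‖x‖ ^ 3 := by positivity
  have heig : -(μ / ‖x‖ ^ 3) + 3 * μ / ‖x‖ ^ 5 * ‖x‖ ^ 2 = 2 * (μ / ‖x‖ ^ 3) := by
    field_simp; ring
  have hab : |-(μ / ‖x‖ ^ 3)| ≤ |2 * (μ / ‖x‖ ^ 3)| := by
    rw [abs_neg, abs_of_nonneg hc, abs_of_nonneg (by positivity)]
    linarith
  rw [norm_smul_id_add_smul_innerSL_smulRight _ _ hx (heig ▸ hab), heig,
    abs_of_nonneg (by positivity), mul_div_assoc]
end
end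

section
/- Let μ > 0 and p, p̄ ∈ ℝ³ with p̄ ≠ 0. Set r = ‖p̄‖ and d = ‖p̄ − p‖, and assume d < r. Then ‖g(p̄) − g(p)‖ ≤ μ d (2r − d) / (r² (r − d)²). -/
/-!
Write `x / ‖x‖³ = ‖x‖⁻¹ • (x / ‖x‖²)`. The map `x ↦ x / ‖x‖²` is inversion in the unit sphere, which
scales distances exactly: `‖x/‖x‖² - y/‖y‖²‖ = ‖x - y‖ / (‖x‖ ‖y‖)`. Splitting
`x/‖x‖³ - y/‖y‖³ = ‖x‖⁻¹ (x/‖x‖² - y/‖y‖²) + (‖x‖⁻¹ - ‖y‖⁻¹) y/‖y‖²` and using the triangle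
inequality twice gives `‖x/‖x‖³ - y/‖y‖³‖ ≤ ‖x - y‖ (‖x‖ + ‖y‖) / (‖x‖² ‖y‖²)`. With `‖x‖ = r`,
`‖x - y‖ = d`, the right side decreases in `‖y‖ ≥ r - d`, and at `‖y‖ = r - d` it is the stated bound.
-/

noncomputable section
open Matrix

section

open EuclideanGeometry

variable {E : Type*} [NormedAddCommGroup E] [InnerProductSpace ℝ E]

theorem norm_inv_sq_smul_sub_inv_sq_smul {x y : E} (hx : x ≠ 0) (hy : y ≠ 0) :
    ‖(‖x‖ ^ 2)⁻¹ • x - (‖y‖ ^ 2)⁻¹ • y‖ = ‖x - y‖ / (‖x‖ * ‖y‖) := by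
  have h := dist_inversion_inversion hx hy 1
  simp only [inversion, dist_eq_norm, sub_zero, vsub_eq_sub, vadd_eq_add, add_zero, one_div,
    inv_pow, one_pow] at h
  rw [h, inv_mul_eq_div]

theorem norm_inv_cube_smul_sub_inv_cube_smul_le {x y : E} (hx : x ≠ 0) (hy : y ≠ 0) :
    ‖(‖x‖ ^ 3)⁻¹ • x - (‖y‖ ^ 3)⁻¹ • y‖ ≤ ‖x - y‖ * (‖x‖ + ‖y‖) / (‖x‖ ^ 2 * ‖y‖ ^ 2) := by
  have hx' : 0 < ‖x‖ := norm_pos_iff.2 hx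
  have hy' : 0 < ‖y‖ := norm_pos_iff.2 hy
  have hsplit : (‖x‖ ^ 3)⁻¹ • x - (‖y‖ ^ 3)⁻¹ • y
      = ‖x‖⁻¹ • ((‖x‖ ^ 2)⁻¹ • x - (‖y‖ ^ 2)⁻¹ • y) + (‖x‖⁻¹ - ‖y‖⁻¹) • (‖y‖ ^ 2)⁻¹ • y := by
    module
  have hinv : |‖x‖⁻¹ - ‖y‖⁻¹| ≤ ‖x - y‖ / (‖x‖ * ‖y‖) := by
    rw [inv_sub_inv hx'.ne' hy'.ne', abs_div, abs_of_pos (mul_pos hx' hy'), abs_sub_comm]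
    gcongr
    exact abs_norm_sub_norm_le x y
  have hy_inv : ‖(‖y‖ ^ 2)⁻¹ • y‖ = ‖y‖⁻¹ := by
    rw [norm_smul, norm_inv, norm_pow, norm_norm]
    field_simp
  calc ‖(‖x‖ ^ 3)⁻¹ • x - (‖y‖ ^ 3)⁻¹ • y‖
      ≤ ‖x‖⁻¹ * ‖(‖x‖ ^ 2)⁻¹ • x - (‖y‖ ^ 2)⁻¹ • y‖ + |‖x‖⁻¹ - ‖y‖⁻¹| * ‖(‖y‖ ^ 2)⁻¹ • y‖ := by
        rw [hsplit]
        refine (norm_add_le _ _).trans_eq ?_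
        rw [norm_smul, norm_smul, norm_inv, norm_norm, Real.norm_eq_abs]
    _ ≤ ‖x‖⁻¹ * (‖x - y‖ / (‖x‖ * ‖y‖)) + ‖x - y‖ / (‖x‖ * ‖y‖) * ‖y‖⁻¹ := by
        rw [norm_inv_sq_smul_sub_inv_sq_smul hx hy, hy_inv]
        gcongr
    _ = ‖x - y‖ * (‖x‖ + ‖y‖) / (‖x‖ ^ 2 * ‖y‖ ^ 2) := by
        field_simp
        ring

end

theorem add_div_sq_le_add_div_sq {r a s : ℝ} (hr : 0 ≤ r) (ha : 0 < a) (has : a ≤ s) :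
    (r + s) / s ^ 2 ≤ (r + a) / a ^ 2 := by
  have hs : 0 < s := ha.trans_le has
  calc (r + s) / s ^ 2 = r / s ^ 2 + 1 / s := by field_simp
    _ ≤ r / a ^ 2 + 1 / a := by gcongr
    _ = (r + a) / a ^ 2 := by field_simp

theorem norm_grav_sub_grav (μ : ℝ) (x y : V3) :
    ‖grav μ x - grav μ y‖ = |μ| * ‖(‖x‖ ^ 3)⁻¹ • x - (‖y‖ ^ 3)⁻¹ • y‖ := by
  have h : grav μ x - grav μ y = (-μ) • ((‖x‖ ^ 3)⁻¹ • x - (‖y‖ ^ 3)⁻¹ • y) := by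
    simp only [grav]
    module
  rw [h, norm_smul, Real.norm_eq_abs, abs_neg]

theorem gravity_difference_bound_general (μ : ℝ) (hμ : 0 < μ) (p pb : V3)
    (hd : ‖pb - p‖ < ‖pb‖) :
    ‖grav μ pb - grav μ p‖
      ≤ μ * ‖pb - p‖ * (2 * ‖pb‖ - ‖pb - p‖)
          / (‖pb‖ ^ 2 * (‖pb‖ - ‖pb - p‖) ^ 2) := by
  have hgap : 0 < ‖pb‖ - ‖pb - p‖ := sub_pos.2 hd
  have hp : ‖pb‖ - ‖pb - p‖ ≤ ‖p‖ := by
    have := norm_sub_norm_le pb p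
    linarith
  have hpb : pb ≠ 0 := norm_pos_iff.1 ((norm_nonneg _).trans_lt hd)
  have hp0 : p ≠ 0 := norm_pos_iff.1 (hgap.trans_le hp)
  calc ‖grav μ pb - grav μ p‖
      ≤ μ * (‖pb - p‖ * (‖pb‖ + ‖p‖) / (‖pb‖ ^ 2 * ‖p‖ ^ 2)) := by
        rw [norm_grav_sub_grav, abs_of_pos hμ]
        gcongr
        exact norm_inv_cube_smul_sub_inv_cube_smul_le hpb hp0
    _ = μ * ‖pb - p‖ / ‖pb‖ ^ 2 * ((‖pb‖ + ‖p‖) / ‖p‖ ^ 2) := by ring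
    _ ≤ μ * ‖pb - p‖ / ‖pb‖ ^ 2 * ((‖pb‖ + (‖pb‖ - ‖pb - p‖)) / (‖pb‖ - ‖pb - p‖) ^ 2) := by
        gcongr μ * ‖pb - p‖ / ‖pb‖ ^ 2 * ?_
        exact add_div_sq_le_add_div_sq (norm_nonneg pb) hgap hp
    _ = μ * ‖pb - p‖ * (2 * ‖pb‖ - ‖pb - p‖) / (‖pb‖ ^ 2 * (‖pb‖ - ‖pb - p‖) ^ 2) := by
        rw [div_mul_div_comm]
        ring

/-- gravity-difference bound
`‖g(p̄) − g(p)‖ ≤ μ d (2r − d) / (r² (r − d)²)` where `r = ‖p̄‖`, `d = ‖p̄ − p‖`. -/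
theorem gravity_difference_bound (μ : ℝ) (hμ : 0 < μ) (p pb : V3) (hpb : pb ≠ 0)
    (hd : ‖pb - p‖ < ‖pb‖) :
    ‖grav μ pb - grav μ p‖
      ≤ μ * ‖pb - p‖ * (2 * ‖pb‖ - ‖pb - p‖)
          / (‖pb‖ ^ 2 * (‖pb‖ - ‖pb - p‖) ^ 2) :=
  gravity_difference_bound_general μ hμ p pb hd
end
end

section
/- Let φ ∈ ℝ³ with θ = ‖φ‖ satisfying 0 < θ < π, and define the SO(3) inverse right Jacobian J_r⁻¹(φ) = I + (1/2)[φ]× + (1/θ² − (1 + cos θ)/(2θ sin θ))([φ]×)². Then the operator norm of J_r⁻¹(φ), as a linear map on Euclidean ℝ³, satisfies ‖J_r⁻¹(φ)‖ ≤ (θ/2)/sin(θ/2). -/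
noncomputable section
open Matrix

/-! On the axis of `φ` the matrix `I + a[φ]× + c[φ]×²` acts as the identity, and on the plane
orthogonal to `φ` as `(1 - c‖φ‖²) I + a[φ]×`, a rotation scaled by
`√((1 - c‖φ‖²)² + a²‖φ‖²)`; so its norm is at most the larger of `1` and that factor.
For `J_r⁻¹` the half-angle formulas give `1 - c θ² = (θ/2) cot (θ/2)`, so the factor is
`(θ/2) / sin (θ/2)`, which is at least `1`. -/

lemma norm_sq_eq_sum_sq (y : V3) : ‖y‖ ^ 2 = y 0 ^ 2 + y 1 ^ 2 + y 2 ^ 2 := by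
  simp [EuclideanSpace.norm_sq_eq, Fin.sum_univ_three]

lemma inner_eq_sum_mul (y z : V3) : inner ℝ y z = y 0 * z 0 + y 1 * z 1 + y 2 * z 2 := by
  simp [PiLp.inner_apply, Fin.sum_univ_three]
  ring

-- The axial/orthogonal splitting of `x`, multiplied through by `‖φ‖²`.
lemma norm_sq_mul_norm_sq_skew_quadratic (φ x : V3) (a c : ℝ) :
    ‖φ‖ ^ 2 * ‖toEuclideanLin (1 + a • skew φ + c • skew φ ^ 2) x‖ ^ 2
      = inner ℝ φ x ^ 2
        + ((1 - c * ‖φ‖ ^ 2) ^ 2 + a ^ 2 * ‖φ‖ ^ 2) * (‖φ‖ ^ 2 * ‖x‖ ^ 2 - inner ℝ φ x ^ 2) := by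
  simp only [norm_sq_eq_sum_sq, inner_eq_sum_mul]
  simp [skew, Matrix.mulVec, dotProduct, Fin.sum_univ_three, pow_two]
  ring

lemma opNorm_skew_quadratic_le (φ : V3) (hφ : 0 < ‖φ‖) (a c : ℝ) :
    ‖(toEuclideanLin (1 + a • skew φ + c • skew φ ^ 2)).toContinuousLinearMap‖
      ≤ max 1 √((1 - c * ‖φ‖ ^ 2) ^ 2 + a ^ 2 * ‖φ‖ ^ 2) := by
  set s := (1 - c * ‖φ‖ ^ 2) ^ 2 + a ^ 2 * ‖φ‖ ^ 2
  set B := max 1 √s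
  have hB1 : 1 ≤ B ^ 2 := one_le_pow₀ (le_max_left _ _)
  have hsB : s ≤ B ^ 2 := by
    rw [← Real.sq_sqrt (show 0 ≤ s by positivity)]
    exact pow_le_pow_left₀ (Real.sqrt_nonneg s) (le_max_right _ _) 2
  refine ContinuousLinearMap.opNorm_le_bound _ (by positivity) fun x ↦ ?_
  have hCS : inner ℝ φ x ^ 2 ≤ ‖φ‖ ^ 2 * ‖x‖ ^ 2 := by
    rw [← mul_pow]
    exact sq_le_sq' (neg_le_of_abs_le (abs_real_inner_le_norm φ x)) (real_inner_le_norm φ x)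
  have hsq : ‖φ‖ ^ 2 * ‖toEuclideanLin (1 + a • skew φ + c • skew φ ^ 2) x‖ ^ 2
      ≤ ‖φ‖ ^ 2 * (B * ‖x‖) ^ 2 := by
    rw [norm_sq_mul_norm_sq_skew_quadratic]
    nlinarith [mul_le_mul_of_nonneg_right hsB (sub_nonneg.2 hCS), sq_nonneg (inner ℝ φ x)]
  exact (pow_le_pow_iff_left₀ (norm_nonneg _) (by positivity) two_ne_zero).1
    (le_of_mul_le_mul_left hsq (by positivity))

lemma sq_one_sub_Jrinv_coeff_mul_add (θ : ℝ) (hθ0 : 0 < θ) (hθπ : θ < Real.pi) :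
    (1 - ((θ ^ 2)⁻¹ - (1 + Real.cos θ) / (2 * θ * Real.sin θ)) * θ ^ 2) ^ 2
        + (1 / 2) ^ 2 * θ ^ 2
      = ((θ / 2) / Real.sin (θ / 2)) ^ 2 := by
  have hsin : 0 < Real.sin (θ / 2) := Real.sin_pos_of_pos_of_lt_pi (by linarith) (by linarith)
  have hcos : 0 < Real.cos (θ / 2) :=
    Real.cos_pos_of_mem_Ioo ⟨by linarith [Real.pi_pos], by linarith⟩
  have hsin_θ : Real.sin θ = 2 * Real.sin (θ / 2) * Real.cos (θ / 2) := by
    rw [← Real.sin_two_mul]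
    ring_nf
  have hcos_θ : 1 + Real.cos θ = 2 * Real.cos (θ / 2) ^ 2 := by
    rw [← add_halves θ, Real.cos_add, add_halves]
    nlinarith [Real.sin_sq_add_cos_sq (θ / 2)]
  rw [hsin_θ, hcos_θ]
  field_simp
  linear_combination θ ^ 2 * Real.sin_sq_add_cos_sq (θ / 2)

/-- the operator norm of the SO(3) inverse right Jacobian is at
most `(θ/2)/sin(θ/2)` for `0 < θ = ‖φ‖ < π`. -/
theorem Jrinv_opNorm_bound (φ : V3) (hθ0 : 0 < ‖φ‖) (hθπ : ‖φ‖ < Real.pi) :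
    ‖(Matrix.toEuclideanLin (Jrinv φ)).toContinuousLinearMap‖
      ≤ (‖φ‖ / 2) / Real.sin (‖φ‖ / 2) := by
  have hsin : 0 < Real.sin (‖φ‖ / 2) :=
    Real.sin_pos_of_pos_of_lt_pi (by linarith) (by linarith)
  have hgain : 1 ≤ (‖φ‖ / 2) / Real.sin (‖φ‖ / 2) :=
    (one_le_div hsin).2 (Real.sin_le (by positivity))
  have hbound := opNorm_skew_quadratic_le φ hθ0 (1 / 2)
    ((‖φ‖ ^ 2)⁻¹ - (1 + Real.cos ‖φ‖) / (2 * ‖φ‖ * Real.sin ‖φ‖))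
  rwa [sq_one_sub_Jrinv_coeff_mul_add _ hθ0 hθπ, Real.sqrt_sq (by positivity),
    max_eq_right hgain] at hbound
end
end

section
/- Let φ ∈ ℝ³ with φ ≠ 0 and θ = ‖φ‖, and define the SO(3) left Jacobian J_ℓ(φ) = I + ((1 − cos θ)/θ²)[φ]× + ((θ − sin θ)/θ³)([φ]×)². Then the operator norm of J_ℓ(φ), as a linear map on Euclidean ℝ³, equals 1; in particular ‖J_ℓ(φ) u‖ ≤ ‖u‖ for every u ∈ ℝ³. -/
noncomputable section
open Matrix

/-!
Writing `J = I + a K + b K²` with `K = [φ]×`, the identity `K (K u) = (φ ⬝ u) φ - ‖φ‖² u` and the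
orthogonality of `K u` to `φ` and `u` give `‖J u‖² = ‖u‖² - (2b - a² - b²‖φ‖²) ‖K u‖²`. For the left
Jacobian the defect coefficient is `(θ² - 2 + 2 cos θ) / θ⁴ ≥ 0`, so `J` is a contraction, and
`J φ = φ` because `K φ = 0`; hence `‖J‖ = 1`.
-/

theorem ContinuousLinearMap.opNorm_eq_one_of_norm_apply_le_of_apply_eq_self
    {𝕜 E : Type*} [NontriviallyNormedField 𝕜] [NormedAddCommGroup E] [NormedSpace 𝕜 E]
    (f : E →L[𝕜] E) (hf : ∀ x, ‖f x‖ ≤ ‖x‖) {v : E} (hv : v ≠ 0) (hfv : f v = v) :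
    ‖f‖ = 1 := by
  refine le_antisymm (f.opNorm_le_bound zero_le_one fun x => (one_mul ‖x‖).symm ▸ hf x) ?_
  have := f.le_opNorm v
  rwa [hfv, le_mul_iff_one_le_left (norm_pos_iff.mpr hv)] at this

theorem EuclideanSpace.real_norm_sq_eq_dotProduct {ι : Type*} [Fintype ι]
    (x : EuclideanSpace ℝ ι) : ‖x‖ ^ 2 = x.ofLp ⬝ᵥ x.ofLp := by
  rw [← real_inner_self_eq_norm_sq, EuclideanSpace.inner_eq_star_dotProduct, star_trivial]

theorem skew_mulVec (w : V3) (u : Fin 3 → ℝ) : skew w *ᵥ u = w.ofLp ⨯₃ u := by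
  ext i
  fin_cases i <;>
  · simp only [mulVec, dotProduct, skew, cross_apply, Fin.sum_univ_three, Fin.isValue, Fin.zero_eta,
      Fin.mk_one, Fin.reduceFinMk, of_apply, cons_val', cons_val_fin_one, cons_val, cons_val_zero,
      cons_val_one, Nat.succ_eq_add_one, Nat.reduceAdd]
    ring

theorem dotProduct_self_add_smul_cross_add_smul_cross_cross {R : Type*} [CommRing R]
    (a b : R) (w u : Fin 3 → R) :
    (u + a • w ⨯₃ u + b • w ⨯₃ (w ⨯₃ u)) ⬝ᵥ (u + a • w ⨯₃ u + b • w ⨯₃ (w ⨯₃ u)) =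
      u ⬝ᵥ u - (2 * b - a ^ 2 - b ^ 2 * (w ⬝ᵥ w)) * (w ⨯₃ u ⬝ᵥ w ⨯₃ u) := by
  have hwv : w ⨯₃ u ⬝ᵥ w = 0 := by rw [dotProduct_comm, dot_self_cross]
  have huv : w ⨯₃ u ⬝ᵥ u = 0 := by rw [dotProduct_comm, dot_cross_self]
  have hvv : w ⨯₃ u ⬝ᵥ w ⨯₃ u = w ⬝ᵥ w * u ⬝ᵥ u - (w ⬝ᵥ u) ^ 2 := by
    rw [cross_dot_cross, dotProduct_comm u w, sq]
  rw [cross_cross_eq_smul_sub_smul' w w u]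
  simp only [add_dotProduct, dotProduct_add, sub_dotProduct, dotProduct_sub, smul_dotProduct,
    dotProduct_smul, smul_eq_mul, dot_self_cross, dot_cross_self, dotProduct_comm u w, hwv, huv,
    hvv]
  ring

theorem Jl_mulVec (φ : V3) (u : Fin 3 → ℝ) :
    Jl φ *ᵥ u = u + ((1 - Real.cos ‖φ‖) / ‖φ‖ ^ 2) • φ.ofLp ⨯₃ u
      + ((‖φ‖ - Real.sin ‖φ‖) / ‖φ‖ ^ 3) • φ.ofLp ⨯₃ (φ.ofLp ⨯₃ u) := by
  simp only [Jl, add_mulVec, one_mulVec, smul_mulVec, pow_two, ← mulVec_mulVec, skew_mulVec]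

theorem Jl_defect_coeff_nonneg (θ : ℝ) :
    0 ≤ 2 * ((θ - Real.sin θ) / θ ^ 3) - ((1 - Real.cos θ) / θ ^ 2) ^ 2
      - ((θ - Real.sin θ) / θ ^ 3) ^ 2 * θ ^ 2 := by
  rcases eq_or_ne θ 0 with rfl | hθ
  · simp
  have hcoeff : 2 * ((θ - Real.sin θ) / θ ^ 3) - ((1 - Real.cos θ) / θ ^ 2) ^ 2
      - ((θ - Real.sin θ) / θ ^ 3) ^ 2 * θ ^ 2 = (θ ^ 2 - 2 + 2 * Real.cos θ) / θ ^ 4 := by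
    field_simp
    linear_combination -Real.sin_sq_add_cos_sq θ
  rw [hcoeff]
  have hcos := Real.one_sub_sq_div_two_le_cos (x := θ)
  exact div_nonneg (by linarith) (by positivity)

theorem norm_toEuclideanLin_Jl_le (φ u : V3) : ‖toEuclideanLin (Jl φ) u‖ ≤ ‖u‖ := by
  refine (sq_le_sq₀ (norm_nonneg _) (norm_nonneg _)).mp ?_
  rw [EuclideanSpace.real_norm_sq_eq_dotProduct, EuclideanSpace.real_norm_sq_eq_dotProduct,
    ofLp_toLpLin, toLin'_apply, Jl_mulVec, dotProduct_self_add_smul_cross_add_smul_cross_cross,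
    ← EuclideanSpace.real_norm_sq_eq_dotProduct φ]
  exact sub_le_self _ (mul_nonneg (Jl_defect_coeff_nonneg _) (dotProduct_self_star_nonneg _))

theorem toEuclideanLin_Jl_self (φ : V3) : toEuclideanLin (Jl φ) φ = φ := by
  ext1
  simp only [ofLp_toLpLin, toLin'_apply, Jl_mulVec, cross_self, map_zero, smul_zero, add_zero]

/-- the operator norm of the SO(3) left Jacobian equals 1;
in particular `‖J_ℓ(φ) u‖ ≤ ‖u‖` for all `u`. -/
theorem Jl_opNorm_eq_one (φ : V3) (hφ : φ ≠ 0) :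
    ‖(Matrix.toEuclideanLin (Jl φ)).toContinuousLinearMap‖ = 1 ∧
    ∀ u : V3, ‖Matrix.toEuclideanLin (Jl φ) u‖ ≤ ‖u‖ :=
  ⟨ContinuousLinearMap.opNorm_eq_one_of_norm_apply_le_of_apply_eq_self _
    (norm_toEuclideanLin_Jl_le φ) hφ (toEuclideanLin_Jl_self φ), norm_toEuclideanLin_Jl_le φ⟩
end
end

section
/- Let ā, ω̄ ∈ ℝ³ and set n̄ = (0, ā, ω̄) ∈ ℝ³×ℝ³×ℝ³. Then for every ξ = (ξ_p, ξ_v, ξ_R) ∈ ℝ³×ℝ³×ℝ³, the vector (−ad_{n̄∧}(ξ∧))∨ + A_C ξ has components (−ω̄ × ξ_p + ξ_v, −ω̄ × ξ_v − ā × ξ_R, −ω̄ × ξ_R); that is, the log-linearized error dynamics matrix −ad_{n̄} + A_C acts componentwise as ξ̇_p = −[ω̄]×ξ_p + ξ_v, ξ̇_v = −[ω̄]×ξ_v − [ā]×ξ_R, ξ̇_R = −[ω̄]×ξ_R. -/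
noncomputable section
open Matrix

theorem cross3_eq_crossProduct (a b : V3) :
    cross3 a b = WithLp.toLp 2 (a.ofLp ⨯₃ b.ofLp) :=
  rfl

theorem neg_cross3 (a b : V3) : -cross3 a b = cross3 b a := by
  simp only [cross3_eq_crossProduct, ← WithLp.toLp_neg, cross_anticomm]

theorem cross3_zero_right (a : V3) : cross3 a 0 = 0 := by
  simp only [cross3_eq_crossProduct, WithLp.ofLp_zero, map_zero, WithLp.toLp_zero]

theorem wedge_add (p v R p' v' R' : V3) :
    wedge p v R + wedge p' v' R' = wedge (p + p') (v + v') (R + R') := by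
  ext i j
  fin_cases i <;> fin_cases j <;> simp [wedge] <;> ring

theorem wedge_neg (p v R : V3) : -wedge p v R = wedge (-p) (-v) (-R) := by
  ext i j
  fin_cases i <;> fin_cases j <;> simp [wedge]

-- The Lie bracket of `𝔰𝔢₂(3)` in wedge coordinates.
theorem wedge_mul_sub_mul (p v R p' v' R' : V3) :
    wedge p v R * wedge p' v' R' - wedge p' v' R' * wedge p v R
      = wedge (cross3 R p' - cross3 R' p) (cross3 R v' - cross3 R' v) (cross3 R R') := by
  ext i j
  fin_cases i <;> fin_cases j <;>
    simp [wedge, cross3] <;> ring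

/-- the log-linearized error dynamics matrix `−ad_{n̄} + A_C`
acts componentwise as `ξ̇_p = −[ω̄]×ξ_p + ξ_v`, `ξ̇_v = −[ω̄]×ξ_v − [ā]×ξ_R`,
`ξ̇_R = −[ω̄]×ξ_R`, where `n̄ = (0, ā, ω̄)`. -/
theorem log_linear_dynamics_structure (abar ωbar : V3) (ξp ξv ξR : V3) :
    -(wedge 0 abar ωbar * wedge ξp ξv ξR - wedge ξp ξv ξR * wedge 0 abar ωbar)
        + wedge ξv 0 0
      = wedge (-(cross3 ωbar ξp) + ξv)
          (-(cross3 ωbar ξv) - cross3 abar ξR)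
          (-(cross3 ωbar ξR)) := by
  rw [wedge_mul_sub_mul, wedge_neg, wedge_add, cross3_zero_right, ← neg_cross3 ξR abar]
  congr 1 <;> abel
end
end

section
/- Let μ > 0, let p, p̄ ∈ ℝ³ with p̄ ≠ 0 and r = ‖p̄‖, let R̄ be an orthogonal 3×3 real matrix (R̄ᵀR̄ = I), and let ξ_R, ξ_p ∈ ℝ³ with θ = ‖ξ_R‖ satisfying 0 < θ < π. Define J_r⁻¹(ξ_R) = I + (1/2)[ξ_R]× + (1/θ² − (1 + cos θ)/(2θ sin θ))([ξ_R]×)². Assume ‖p̄ − p‖ ≤ ‖ξ_p‖ and ‖ξ_p‖ < r. Then ‖J_r⁻¹(ξ_R) · (R̄ᵀ (g(p̄) − g(p)))‖ ≤ ((θ/2)/sin(θ/2)) · μ ‖ξ_p‖ (2r − ‖ξ_p‖) / (r² (r − ‖ξ_p‖)²). -/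
noncomputable section
open Matrix

/-!
`J_r⁻¹(φ) = 1 + ½[φ]× + c[φ]×²` fixes the axis of `φ`; on the orthogonal plane `[φ]×` is `θ`
times a quarter turn and `[φ]×² = -θ²`, so there `J_r⁻¹(φ)` is `(1 - cθ²) + ½[φ]×`, of norm
`√((1 - cθ²)² + θ²/4)`, which the half-angle formulas turn into `(θ/2)/sin(θ/2) ≥ 1`.
`R̄ᵀ` is an isometry. Squaring out, `‖g(x) - g(y)‖ ≤ μ‖x - y‖(‖x‖ + ‖y‖)/(‖x‖²‖y‖²)`, and for
`‖x - y‖ ≤ d < ‖x‖` this is at most `μ((‖x‖ - d)⁻² - ‖x‖⁻²)`.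
-/

open Real

theorem norm_toEuclideanLin_of_transpose_mul_self {m n : Type*} [Fintype m] [Fintype n]
    [DecidableEq m] [DecidableEq n] {A : Matrix m n ℝ} (hA : Aᵀ * A = 1)
    (x : EuclideanSpace ℝ n) : ‖toEuclideanLin A x‖ = ‖x‖ := by
  have hAA : toEuclideanLin Aᴴ (toEuclideanLin A x) = x := by
    rw [conjTranspose_eq_transpose_of_trivial, ← LinearMap.comp_apply, ← toLpLin_mul_same, hA,
      toLpLin_one, LinearMap.id_apply]
  rw [← sq_eq_sq₀ (norm_nonneg _) (norm_nonneg _), ← real_inner_self_eq_norm_sq,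
    ← real_inner_self_eq_norm_sq, ← LinearMap.adjoint_inner_right,
    ← toEuclideanLin_conjTranspose_eq_adjoint, hAA]

theorem norm_sq_toEuclideanLin_one_add_smul_skew_add_smul_skew_sq (a c : ℝ) (φ u : V3) :
    ‖toEuclideanLin (1 + a • skew φ + c • skew φ ^ 2) u‖ ^ 2
      = ((1 - c * ‖φ‖ ^ 2) ^ 2 + a ^ 2 * ‖φ‖ ^ 2) * ‖u‖ ^ 2
        + (2 * c - c ^ 2 * ‖φ‖ ^ 2 - a ^ 2) * inner ℝ φ u ^ 2 := by
  simp only [EuclideanSpace.real_norm_sq_eq, PiLp.inner_apply, Fin.sum_univ_three]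
  simp [skew, sq, Fin.sum_univ_three, mulVec, dotProduct]
  ring

def jrinvCoeff (θ : ℝ) : ℝ := (θ ^ 2)⁻¹ - (1 + cos θ) / (2 * θ * sin θ)

theorem Jrinv_eq (φ : V3) : Jrinv φ = 1 + (1 / 2 : ℝ) • skew φ + jrinvCoeff ‖φ‖ • skew φ ^ 2 :=
  rfl

theorem sq_one_sub_jrinvCoeff_mul_sq_add {θ : ℝ} (h0 : 0 < θ) (hπ : θ < π) :
    (1 - jrinvCoeff θ * θ ^ 2) ^ 2 + (1 / 2) ^ 2 * θ ^ 2 = ((θ / 2) / sin (θ / 2)) ^ 2 := by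
  have hs : 0 < sin (θ / 2) := sin_pos_of_pos_of_lt_pi (by linarith) (by linarith)
  have hc : 0 < cos (θ / 2) := cos_pos_of_mem_Ioo ⟨by linarith, by linarith⟩
  have hcot : 1 - jrinvCoeff θ * θ ^ 2 = (θ / 2) * cos (θ / 2) / sin (θ / 2) := by
    have hθ : θ = 2 * (θ / 2) := by ring
    rw [jrinvCoeff, hθ, sin_two_mul, cos_two_mul]
    field_simp
    ring
  rw [hcot]
  field_simp
  linear_combination sin_sq_add_cos_sq (θ / 2)

theorem norm_toEuclideanLin_Jrinv_le {φ : V3} (h0 : 0 < ‖φ‖) (hπ : ‖φ‖ < π) (u : V3) :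
    ‖toEuclideanLin (Jrinv φ) u‖ ≤ (‖φ‖ / 2) / sin (‖φ‖ / 2) * ‖u‖ := by
  set θ := ‖φ‖
  set c := jrinvCoeff θ
  set K := (θ / 2) / sin (θ / 2)
  have hK : 1 ≤ K :=
    (one_le_div (sin_pos_of_pos_of_lt_pi (by linarith) (by linarith))).2 (sin_lt (by linarith)).le
  have hKθ := sq_one_sub_jrinvCoeff_mul_sq_add h0 hπ
  have hcoef : 2 * c - c ^ 2 * θ ^ 2 - (1 / 2) ^ 2 ≤ 0 := by
    have h : θ ^ 2 * (2 * c - c ^ 2 * θ ^ 2 - (1 / 2) ^ 2) = 1 - K ^ 2 := by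
      linear_combination -hKθ
    exact nonpos_of_mul_nonpos_right (h.trans_le (sub_nonpos.2 (one_le_pow₀ hK))) (pow_pos h0 2)
  rw [← pow_le_pow_iff_left₀ (norm_nonneg _) (by positivity) two_ne_zero, Jrinv_eq,
    norm_sq_toEuclideanLin_one_add_smul_skew_add_smul_skew_sq, mul_pow, ← hKθ]
  linarith [mul_nonpos_of_nonpos_of_nonneg hcoef (sq_nonneg (inner ℝ φ u))]

theorem norm_grav_sub_grav_le {μ : ℝ} (hμ : 0 ≤ μ) {x y : V3} (hx : x ≠ 0) (hy : y ≠ 0) :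
    ‖grav μ x - grav μ y‖ ≤ μ * ‖x - y‖ * (‖x‖ + ‖y‖) / (‖x‖ ^ 2 * ‖y‖ ^ 2) := by
  have hr : 0 < ‖x‖ := norm_pos_iff.2 hx
  have hs : 0 < ‖y‖ := norm_pos_iff.2 hy
  set r := ‖x‖
  set s := ‖y‖
  set t := inner ℝ x y
  have hts : t ≤ r * s := real_inner_le_norm x y
  have hlhs : ‖grav μ x - grav μ y‖ ^ 2
      = μ ^ 2 * (r ^ 4 + s ^ 4 - 2 * t * r * s) / (r ^ 4 * s ^ 4) := by
    rw [grav, grav, norm_sub_sq_real, norm_smul, norm_smul, real_inner_smul_left,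
      real_inner_smul_right, Real.norm_eq_abs, Real.norm_eq_abs, abs_neg, abs_neg,
      abs_of_nonneg (by positivity : 0 ≤ μ / r ^ 3), abs_of_nonneg (by positivity : 0 ≤ μ / s ^ 3)]
    field_simp
    ring
  have hrhs : (μ * ‖x - y‖ * (r + s) / (r ^ 2 * s ^ 2)) ^ 2
      = μ ^ 2 * ((r ^ 2 - 2 * t + s ^ 2) * (r + s) ^ 2) / (r ^ 4 * s ^ 4) := by
    rw [div_pow, mul_pow, mul_pow, norm_sub_sq_real]
    ring
  -- the difference of the two sides is `2 (rs - t)(r² + rs + s²)`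
  have hnum : r ^ 4 + s ^ 4 - 2 * t * r * s ≤ (r ^ 2 - 2 * t + s ^ 2) * (r + s) ^ 2 := by
    nlinarith [mul_nonneg (sub_nonneg.2 hts) (by positivity : 0 ≤ r ^ 2 + r * s + s ^ 2)]
  rw [← pow_le_pow_iff_left₀ (norm_nonneg _) (by positivity) two_ne_zero, hlhs, hrhs]
  gcongr

theorem norm_grav_sub_grav_le_of_norm_sub_le {μ d : ℝ} (hμ : 0 ≤ μ) {x y : V3}
    (hxy : ‖x - y‖ ≤ d) (hd : d < ‖x‖) :
    ‖grav μ x - grav μ y‖ ≤ μ * d * (2 * ‖x‖ - d) / (‖x‖ ^ 2 * (‖x‖ - d) ^ 2) := by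
  set r := ‖x‖
  set δ := ‖x - y‖
  have hδ : 0 ≤ δ := norm_nonneg _
  have hrd : 0 < r - d := by linarith
  have hrδ : 0 < r - δ := by linarith
  have hr : 0 < r := by linarith
  have hry : r - δ ≤ ‖y‖ := by linarith [norm_sub_norm_le x y]
  have hx : x ≠ 0 := norm_pos_iff.1 (by linarith)
  have hy : y ≠ 0 := norm_pos_iff.1 (by linarith)
  calc ‖grav μ x - grav μ y‖
      ≤ μ * δ * (r + ‖y‖) / (r ^ 2 * ‖y‖ ^ 2) := norm_grav_sub_grav_le hμ hx hy
    _ = μ * δ / r ^ 2 * (r / ‖y‖ ^ 2 + 1 / ‖y‖) := by field_simp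
    _ ≤ μ * δ / r ^ 2 * (r / (r - δ) ^ 2 + 1 / (r - δ)) := by gcongr
    _ = μ * (1 / (r - δ) ^ 2 - 1 / r ^ 2) := by field_simp; ring
    _ ≤ μ * (1 / (r - d) ^ 2 - 1 / r ^ 2) := by gcongr
    _ = μ * d * (2 * r - d) / (r ^ 2 * (r - d) ^ 2) := by field_simp; ring

theorem gravity_mismatch_bound_general (μ : ℝ) (hμ : 0 < μ) (p pb : V3)
    (Rb : Matrix (Fin 3) (Fin 3) ℝ) (hRb : Rbᵀ * Rb = 1)
    (ξR ξp : V3) (hθ0 : 0 < ‖ξR‖) (hθπ : ‖ξR‖ < Real.pi)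
    (hdle : ‖pb - p‖ ≤ ‖ξp‖) (hlt : ‖ξp‖ < ‖pb‖) :
    ‖Matrix.toEuclideanLin (Jrinv ξR)
        (Matrix.toEuclideanLin Rbᵀ (grav μ pb - grav μ p))‖
      ≤ ((‖ξR‖ / 2) / Real.sin (‖ξR‖ / 2))
          * (μ * ‖ξp‖ * (2 * ‖pb‖ - ‖ξp‖)
              / (‖pb‖ ^ 2 * (‖pb‖ - ‖ξp‖) ^ 2)) := by
  have hRbT : Rbᵀᵀ * Rbᵀ = 1 := by rw [transpose_transpose, mul_eq_one_comm, hRb]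
  have hsin : 0 < sin (‖ξR‖ / 2) := sin_pos_of_pos_of_lt_pi (by linarith) (by linarith)
  calc _ ≤ (‖ξR‖ / 2) / sin (‖ξR‖ / 2) * ‖toEuclideanLin Rbᵀ (grav μ pb - grav μ p)‖ :=
        norm_toEuclideanLin_Jrinv_le hθ0 hθπ _
    _ = (‖ξR‖ / 2) / sin (‖ξR‖ / 2) * ‖grav μ pb - grav μ p‖ := by
        rw [norm_toEuclideanLin_of_transpose_mul_self hRbT]
    _ ≤ _ := by
        gcongr
        exact norm_grav_sub_grav_le_of_norm_sub_le hμ.le hdle hlt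

/-- the gravity-mismatch bound
`‖J_r⁻¹(ξ_R) R̄ᵀ(g(p̄) − g(p))‖ ≤ (θ/2)/sin(θ/2) · μ‖ξ_p‖(2r − ‖ξ_p‖)/(r²(r − ‖ξ_p‖)²)`. -/
theorem gravity_mismatch_bound (μ : ℝ) (hμ : 0 < μ) (p pb : V3) (hpb : pb ≠ 0)
    (Rb : Matrix (Fin 3) (Fin 3) ℝ) (hRb : Rbᵀ * Rb = 1)
    (ξR ξp : V3) (hθ0 : 0 < ‖ξR‖) (hθπ : ‖ξR‖ < Real.pi)
    (hdle : ‖pb - p‖ ≤ ‖ξp‖) (hlt : ‖ξp‖ < ‖pb‖) :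
    ‖Matrix.toEuclideanLin (Jrinv ξR)
        (Matrix.toEuclideanLin Rbᵀ (grav μ pb - grav μ p))‖
      ≤ ((‖ξR‖ / 2) / Real.sin (‖ξR‖ / 2))
          * (μ * ‖ξp‖ * (2 * ‖pb‖ - ‖ξp‖)
              / (‖pb‖ ^ 2 * (‖pb‖ - ‖ξp‖) ^ 2)) :=
  gravity_mismatch_bound_general μ hμ p pb Rb hRb ξR ξp hθ0 hθπ hdle hlt
end
end
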